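/- Fix a time horizon n ≥ 1, real numbers α ≥ 0, λ ≥ 2 and 𝓘 ≥ 0, and for each round t ∈ {1,…,n} functions Δ_t : S × A → ℝ with Δ_t(s,a) ≥ 0 and I_t : S × A → ℝ with I_t(s,a) > 0, inducing for each t the round-t functionals reg_t, info_t and ratios Ψ_{t,α}^λ on policies. For each t let π_t be a policy minimizing Ψ_{t,α}^2, and suppose that for each t there exists a policy q_t with Ψ_{t,α}^λ(q_t) ≤ 𝓘. Then Σ_{t=1}^n reg_t(π_t) ≤ n·α + 2^{1−2/λ} · 𝓘^{1/λ} · n^{1−1/λ} · (Σ_{t=1}^n info_t(π_t))^{1/λ}. -/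

import Mathlib

/-- A policy assigns to each context `s` a probability vector over the actions `A`. -/
structure Policy (S A : Type) [Fintype S] [Fintype A] where
  prob : S → A → ℝ
  nonneg : ∀ s a, 0 ≤ prob s a
  sum_eq_one : ∀ s, ∑ a, prob s a = 1

/-- Expected one-step regret of a policy under context distribution `p`. -/
noncomputable def reg {S A : Type} [Fintype S] [Fintype A]
    (p : S → ℝ) (Δ : S → A → ℝ) (π : Policy S A) : ℝ :=
  ∑ s, p s * ∑ a, Δ s a * π.prob s a

/-- Expected information gain of a policy under context distribution `p`. -/
noncomputable def info {S A : Type} [Fintype S] [Fintype A]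
    (p : S → ℝ) (I : S → A → ℝ) (π : Policy S A) : ℝ :=
  ∑ s, p s * ∑ a, I s a * π.prob s a

/-- The `(α, λ)`-marginal information ratio `Ψ_α^λ(π)`. -/
noncomputable def ratio {S A : Type} [Fintype S] [Fintype A]
    (p : S → ℝ) (Δ I : S → A → ℝ) (α lam : ℝ) (π : Policy S A) : ℝ :=
  (max 0 (reg p Δ π - α)) ^ lam / info p I π

/-!
Mixing the `Ψ_α^2`-minimizer `π` with any policy `q` and differentiating at the mixing weight
`0` gives the first-order condition `x (u + v) ≤ 2 u w`, where `x, w` are the positive parts of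
`reg - α` and `u, v` the information gains of `π, q` (the excess is convex along the mixture
while the information is linear). Since `(u + v)^λ ≥ 4 u^(λ-1) v` for `λ ≥ 2`, this turns into
`Ψ_α^λ(π) ≤ 2^(λ-2) Ψ_α^λ(q)`, so each round `reg(π_t) - α ≤ (2^(λ-2) 𝓘 info(π_t))^(1/λ)`.
Summing over rounds and applying the power-mean inequality to `∑ info(π_t)^(1/λ)` finishes.
-/
open Finset Filter Topology

section RealInequalities

open Real

lemma nonneg_of_forall_add_mul_nonneg {A B : ℝ} (h : ∀ γ ∈ Set.Ioc (0 : ℝ) 1, 0 ≤ A + γ * B) :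
    0 ≤ A := by
  have hlim : Tendsto (fun γ : ℝ => A + γ * B) (𝓝[>] 0) (𝓝 A) := by
    have : Continuous fun γ : ℝ => A + γ * B := by fun_prop
    simpa using (this.tendsto 0).mono_left nhdsWithin_le_nhds
  exact ge_of_tendsto hlim (by filter_upwards [Ioc_mem_nhdsGT one_pos] using h)

lemma mul_add_le_two_mul_of_forall_sq_div_le {x w u v : ℝ} (hx : 0 ≤ x) (hw : 0 ≤ w)
    (hu : 0 < u) (hv : 0 < v)
    (h : ∀ γ ∈ Set.Ioc (0 : ℝ) 1,
      x ^ 2 / u ≤ ((1 - γ) * x + γ * w) ^ 2 / ((1 - γ) * u + γ * v)) :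
    x * (u + v) ≤ 2 * u * w := by
  have hfirst : 0 ≤ 2 * u * x * w - x ^ 2 * (u + v) := by
    -- cleared of denominators and divided by `γ`, `h γ` reads `0 ≤ hfirst + γ u (w - x)^2`
    refine nonneg_of_forall_add_mul_nonneg (B := u * (w - x) ^ 2) fun γ hγ => ?_
    have hmix : 0 < (1 - γ) * u + γ * v := by nlinarith [hγ.1, hγ.2]
    have := h γ hγ
    rw [div_le_div_iff₀ hu hmix] at this
    nlinarith [hγ.1]
  rcases hx.eq_or_lt with rfl | hx
  · rw [zero_mul]; positivity
  · nlinarith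

lemma four_mul_rpow_sub_one_mul_le_add_rpow {u v lam : ℝ} (hu : 0 ≤ u) (hv : 0 ≤ v)
    (hlam : 2 ≤ lam) : 4 * (u ^ (lam - 1) * v) ≤ (u + v) ^ lam := by
  have hsplit : ∀ y : ℝ, 0 ≤ y → y ^ lam = y ^ (lam - 2) * y ^ 2 := fun y hy => by
    rw [← rpow_natCast, ← rpow_add' hy (by norm_num; linarith)]; norm_num
  have hu1 : u ^ (lam - 1) = u ^ (lam - 2) * u := by
    rw [← rpow_add_one' hu (by linarith)]; ring_nf
  calc 4 * (u ^ (lam - 1) * v) = u ^ (lam - 2) * (4 * u * v) := by rw [hu1]; ring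
    _ ≤ (u + v) ^ (lam - 2) * (u + v) ^ 2 := by
        gcongr <;> nlinarith [sq_nonneg (u - v)]
    _ = (u + v) ^ lam := (hsplit _ (by positivity)).symm

lemma rpow_div_le_of_mul_add_le {x w u v lam : ℝ} (hx : 0 ≤ x) (hu : 0 < u) (hv : 0 < v)
    (hlam : 2 ≤ lam) (h : x * (u + v) ≤ 2 * u * w) :
    x ^ lam / u ≤ 2 ^ (lam - 2) * (w ^ lam / v) := by
  have huv : 0 < u + v := by linarith
  have hw : 0 ≤ w := by nlinarith
  have hx_le : x ≤ 2 * u * w / (u + v) := by rw [le_div_iff₀ huv]; exact h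
  have h2 : (2 : ℝ) ^ lam = 2 ^ (lam - 2) * 4 := by
    rw [rpow_sub two_pos]; norm_num
  have hu_pow : u ^ lam = u ^ (lam - 1) * u := by
    rw [rpow_sub_one hu.ne']; field_simp
  rw [div_le_iff₀ hu, mul_div_assoc', div_mul_eq_mul_div, le_div_iff₀ hv]
  calc x ^ lam * v ≤ (2 * u * w / (u + v)) ^ lam * v := by gcongr
    _ = 2 ^ (lam - 2) * w ^ lam * u * (4 * (u ^ (lam - 1) * v)) / (u + v) ^ lam := by
        rw [div_rpow (by positivity) huv.le, mul_rpow (by positivity) hw,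
          mul_rpow zero_le_two hu.le, h2, hu_pow]
        ring
    _ ≤ 2 ^ (lam - 2) * w ^ lam * u * (u + v) ^ lam / (u + v) ^ lam := by
        gcongr
        exact four_mul_rpow_sub_one_mul_le_add_rpow hu.le hv.le hlam
    _ = 2 ^ (lam - 2) * w ^ lam * u := by field_simp

lemma le_mul_rpow_of_rpow_div_le {x u K lam : ℝ} (hx : 0 ≤ x) (hu : 0 < u) (hK : 0 ≤ K)
    (hlam : 0 < lam) (h : x ^ lam / u ≤ K) : x ≤ K ^ (1 / lam) * u ^ (1 / lam) := by
  rw [← mul_rpow hK hu.le, one_div, le_rpow_inv_iff_of_pos hx (by positivity) hlam]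
  rwa [div_le_iff₀ hu] at h

lemma sum_rpow_one_div_le {ι : Type*} (s : Finset ι) {f : ι → ℝ} (hf : ∀ i ∈ s, 0 ≤ f i)
    {lam : ℝ} (hlam : 1 ≤ lam) :
    ∑ i ∈ s, f i ^ (1 / lam) ≤ (#s : ℝ) ^ (1 - 1 / lam) * (∑ i ∈ s, f i) ^ (1 / lam) := by
  have hlam0 : 0 < lam := by linarith
  have hpow := rpow_sum_le_const_mul_sum_rpow_of_nonneg s hlam
    (f := fun i => f i ^ (1 / lam)) fun i hi => rpow_nonneg (hf i hi) _
  have hcancel : ∀ i ∈ s, (f i ^ (1 / lam)) ^ lam = f i := fun i hi => by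
    rw [one_div, rpow_inv_rpow (hf i hi) hlam0.ne']
  rw [sum_congr rfl hcancel] at hpow
  have hsum : 0 ≤ ∑ i ∈ s, f i := sum_nonneg hf
  calc _ ≤ ((#s : ℝ) ^ (lam - 1) * ∑ i ∈ s, f i) ^ lam⁻¹ :=
        (le_rpow_inv_iff_of_pos (sum_nonneg fun i hi => rpow_nonneg (hf i hi) _)
          (by positivity) hlam0).2 hpow
    _ = _ := by
        rw [mul_rpow (by positivity) hsum, ← rpow_mul (by positivity), one_div]
        congr 2
        field_simp

end RealInequalities

variable {S A : Type} [Fintype S] [Fintype A]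

def Policy.mix (π q : Policy S A) (γ : ℝ) (hγ : γ ∈ Set.Icc (0 : ℝ) 1) : Policy S A where
  prob s a := (1 - γ) * π.prob s a + γ * q.prob s a
  nonneg s a := add_nonneg (mul_nonneg (sub_nonneg.2 hγ.2) (π.nonneg s a))
    (mul_nonneg hγ.1 (q.nonneg s a))
  sum_eq_one s := by
    rw [sum_add_distrib, ← mul_sum, ← mul_sum, π.sum_eq_one, q.sum_eq_one]
    ring

lemma reg_mix (p : S → ℝ) (Δ : S → A → ℝ) (π q : Policy S A) (γ : ℝ)
    (hγ : γ ∈ Set.Icc (0 : ℝ) 1) :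
    reg p Δ (π.mix q γ hγ) = (1 - γ) * reg p Δ π + γ * reg p Δ q := by
  simp only [reg, Policy.mix, mul_add, sum_add_distrib, mul_sum]
  congr 1 <;> exact sum_congr rfl fun s _ => sum_congr rfl fun a _ => by ring

lemma info_mix (p : S → ℝ) (I : S → A → ℝ) (π q : Policy S A) (γ : ℝ)
    (hγ : γ ∈ Set.Icc (0 : ℝ) 1) :
    info p I (π.mix q γ hγ) = (1 - γ) * info p I π + γ * info p I q :=
  reg_mix p I π q γ hγ

lemma info_pos {p : S → ℝ} (hp0 : ∀ s, 0 ≤ p s) (hpex : ∃ s, 0 < p s) {I : S → A → ℝ}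
    (hI : ∀ s a, 0 < I s a) (π : Policy S A) : 0 < info p I π := by
  obtain ⟨s₀, hs₀⟩ := hpex
  obtain ⟨a₀, -, ha₀⟩ : ∃ a ∈ univ, (0 : ℝ) < π.prob s₀ a :=
    exists_lt_of_sum_lt (by simp [π.sum_eq_one s₀])
  have hinner : ∀ s, 0 ≤ ∑ a, I s a * π.prob s a := fun s =>
    sum_nonneg fun a _ => mul_nonneg (hI s a).le (π.nonneg s a)
  refine sum_pos' (fun s _ => mul_nonneg (hp0 s) (hinner s)) ⟨s₀, mem_univ _, ?_⟩
  exact mul_pos hs₀ (sum_pos' (fun a _ => mul_nonneg (hI s₀ a).le (π.nonneg s₀ a))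
    ⟨a₀, mem_univ _, mul_pos (hI s₀ a₀) ha₀⟩)

noncomputable def excess (p : S → ℝ) (Δ : S → A → ℝ) (α : ℝ) (π : Policy S A) : ℝ :=
  max 0 (reg p Δ π - α)

lemma ratio_eq_excess_rpow_div (p : S → ℝ) (Δ I : S → A → ℝ) (α lam : ℝ) (π : Policy S A) :
    ratio p Δ I α lam π = excess p Δ α π ^ lam / info p I π := rfl

lemma excess_nonneg (p : S → ℝ) (Δ : S → A → ℝ) (α : ℝ) (π : Policy S A) :
    0 ≤ excess p Δ α π :=
  le_max_left _ _

lemma sub_le_excess (p : S → ℝ) (Δ : S → A → ℝ) (α : ℝ) (π : Policy S A) :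
    reg p Δ π - α ≤ excess p Δ α π :=
  le_max_right _ _

lemma excess_mix_le (p : S → ℝ) (Δ : S → A → ℝ) (α : ℝ) (π q : Policy S A) (γ : ℝ)
    (hγ : γ ∈ Set.Icc (0 : ℝ) 1) :
    excess p Δ α (π.mix q γ hγ) ≤ (1 - γ) * excess p Δ α π + γ * excess p Δ α q := by
  have h1γ : 0 ≤ 1 - γ := sub_nonneg.2 hγ.2
  refine max_le (add_nonneg (mul_nonneg h1γ (excess_nonneg ..))
    (mul_nonneg hγ.1 (excess_nonneg ..))) ?_
  calc reg p Δ (π.mix q γ hγ) - α = (1 - γ) * (reg p Δ π - α) + γ * (reg p Δ q - α) := by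
        rw [reg_mix]; ring
    _ ≤ (1 - γ) * excess p Δ α π + γ * excess p Δ α q :=
        add_le_add (mul_le_mul_of_nonneg_left (sub_le_excess p Δ α π) h1γ)
          (mul_le_mul_of_nonneg_left (sub_le_excess p Δ α q) hγ.1)

section Minimizer

variable {p : S → ℝ} (hp0 : ∀ s, 0 ≤ p s) (hpex : ∃ s, 0 < p s) {Δ I : S → A → ℝ}
  (hI : ∀ s a, 0 < I s a) {α : ℝ} {π : Policy S A}
  (hmin : ∀ q : Policy S A, ratio p Δ I α 2 π ≤ ratio p Δ I α 2 q)
include hp0 hpex hI hmin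

lemma excess_mul_info_add_le_of_minimizes (q : Policy S A) :
    excess p Δ α π * (info p I π + info p I q) ≤ 2 * info p I π * excess p Δ α q := by
  refine mul_add_le_two_mul_of_forall_sq_div_le (excess_nonneg ..) (excess_nonneg ..)
    (info_pos hp0 hpex hI π) (info_pos hp0 hpex hI q) fun γ hγ => ?_
  have hγ' : γ ∈ Set.Icc (0 : ℝ) 1 := Set.Ioc_subset_Icc_self hγ
  have hmix_pos := info_pos hp0 hpex hI (π.mix q γ hγ')
  calc excess p Δ α π ^ 2 / info p I π = ratio p Δ I α 2 π := by
        rw [ratio_eq_excess_rpow_div, Real.rpow_two]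
    _ ≤ ratio p Δ I α 2 (π.mix q γ hγ') := hmin _
    _ = excess p Δ α (π.mix q γ hγ') ^ 2 / info p I (π.mix q γ hγ') := by
        rw [ratio_eq_excess_rpow_div, Real.rpow_two]
    _ ≤ _ := by
        rw [← info_mix p I π q γ hγ']
        gcongr
        · exact excess_nonneg ..
        · exact excess_mix_le p Δ α π q γ hγ'

lemma ratio_le_of_minimizes {lam : ℝ} (hlam : 2 ≤ lam) (q : Policy S A) :
    ratio p Δ I α lam π ≤ 2 ^ (lam - 2) * ratio p Δ I α lam q :=
  rpow_div_le_of_mul_add_le (excess_nonneg ..) (info_pos hp0 hpex hI π)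
    (info_pos hp0 hpex hI q) hlam
    (excess_mul_info_add_le_of_minimizes hp0 hpex hI hmin q)

lemma excess_le_of_minimizes {lam Ibd : ℝ} (hlam : 2 ≤ lam) (hIbd : 0 ≤ Ibd)
    (hq : ∃ q : Policy S A, ratio p Δ I α lam q ≤ Ibd) :
    excess p Δ α π ≤ 2 ^ (1 - 2 / lam) * Ibd ^ (1 / lam) * info p I π ^ (1 / lam) := by
  obtain ⟨q, hq⟩ := hq
  have hlam0 : 0 < lam := by linarith
  have hK : (2 ^ (lam - 2) * Ibd) ^ (1 / lam) = 2 ^ (1 - 2 / lam) * Ibd ^ (1 / lam) := by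
    rw [Real.mul_rpow (by positivity) hIbd, ← Real.rpow_mul zero_le_two]
    congr 2
    field_simp
  rw [← hK]
  refine le_mul_rpow_of_rpow_div_le (excess_nonneg ..) (info_pos hp0 hpex hI π)
    (by positivity) hlam0 ?_
  calc _ = ratio p Δ I α lam π := rfl
    _ ≤ 2 ^ (lam - 2) * ratio p Δ I α lam q := ratio_le_of_minimizes hp0 hpex hI hmin hlam q
    _ ≤ 2 ^ (lam - 2) * Ibd := by gcongr

end Minimizer

theorem stmt_4_general {S A : Type} [Fintype S] [Fintype A]
    (p : S → ℝ) (hp0 : ∀ s, 0 ≤ p s) (hpex : ∃ s, 0 < p s)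
    (n : ℕ)
    (α lam Ibd : ℝ) (hlam : 2 ≤ lam) (hIbd : 0 ≤ Ibd)
    (Δ I : Fin n → S → A → ℝ)
    (hI : ∀ t s a, 0 < I t s a)
    (π : Fin n → Policy S A)
    (hmin : ∀ t, ∀ q : Policy S A,
      ratio p (Δ t) (I t) α 2 (π t) ≤ ratio p (Δ t) (I t) α 2 q)
    (hq : ∀ t, ∃ q : Policy S A, ratio p (Δ t) (I t) α lam q ≤ Ibd) :
    ∑ t, reg p (Δ t) (π t) ≤
      (n : ℝ) * α + 2 ^ (1 - 2 / lam) * Ibd ^ (1 / lam) * (n : ℝ) ^ (1 - 1 / lam) *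
        (∑ t, info p (I t) (π t)) ^ (1 / lam) := by
  set C := 2 ^ (1 - 2 / lam) * Ibd ^ (1 / lam)
  have hround : ∀ t, reg p (Δ t) (π t) ≤ α + C * info p (I t) (π t) ^ (1 / lam) := fun t =>
    (sub_le_iff_le_add'.1 (sub_le_excess ..)).trans <| add_le_add_right
      (excess_le_of_minimizes hp0 hpex (hI t) (hmin t) hlam hIbd (hq t)) α
  calc ∑ t, reg p (Δ t) (π t) ≤ ∑ t, (α + C * info p (I t) (π t) ^ (1 / lam)) :=
        sum_le_sum fun t _ => hround t
    _ = n * α + C * ∑ t, info p (I t) (π t) ^ (1 / lam) := by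
        simp [sum_add_distrib, mul_sum]
    _ ≤ n * α + C * ((n : ℝ) ^ (1 - 1 / lam) * (∑ t, info p (I t) (π t)) ^ (1 / lam)) := by
        gcongr
        simpa using sum_rpow_one_div_le univ
          (fun t _ => (info_pos hp0 hpex (hI t) (π t)).le) (by linarith : (1 : ℝ) ≤ lam)
    _ = _ := by ring

/-- Deterministic form of Theorem 3.1 (generic regret bound for contextual IDS):
if at each round `t` the policy `π t` minimizes the `(α,2)`-marginal information ratio
and some policy has `(α,λ)`-ratio at most `𝓘`, then
`∑ reg_t(π_t) ≤ n·α + 2^(1−2/λ)·𝓘^(1/λ)·n^(1−1/λ)·(∑ info_t(π_t))^(1/λ)`. -/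
theorem stmt_4 {S A : Type} [Fintype S] [Fintype A] [Nonempty S] [Nonempty A]
    (p : S → ℝ) (hp0 : ∀ s, 0 ≤ p s) (hp1 : ∑ s, p s = 1) (hpex : ∃ s, 0 < p s)
    (n : ℕ) (hn : 1 ≤ n)
    (α lam Ibd : ℝ) (hα : 0 ≤ α) (hlam : 2 ≤ lam) (hIbd : 0 ≤ Ibd)
    (Δ I : Fin n → S → A → ℝ)
    (hΔ : ∀ t s a, 0 ≤ Δ t s a) (hI : ∀ t s a, 0 < I t s a)
    (π : Fin n → Policy S A)
    (hmin : ∀ t, ∀ q : Policy S A,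
      ratio p (Δ t) (I t) α 2 (π t) ≤ ratio p (Δ t) (I t) α 2 q)
    (hq : ∀ t, ∃ q : Policy S A, ratio p (Δ t) (I t) α lam q ≤ Ibd) :
    ∑ t, reg p (Δ t) (π t) ≤
      (n : ℝ) * α + 2 ^ (1 - 2 / lam) * Ibd ^ (1 / lam) * (n : ℝ) ^ (1 - 1 / lam) *
        (∑ t, info p (I t) (π t)) ^ (1 / lam) :=
  stmt_4_general p hp0 hpex n α lam Ibd hlam hIbd Δ I hI π hmin hq
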